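/- For g₁, g₂ ∈ K[x] and the supertransvectant cocycles Υ_{λ,λ+5/2} and Υ_{λ+5/2,λ+5}, the cup-product B_{λ,λ+5} = [[Υ_{λ+5/2,λ+5}, Υ_{λ,λ+5/2}]] evaluated on the even contact fields X_{g₁}, X_{g₂} and a density F = f₀ + f₁θ equals (up to an overall nonzero scalar) (g₁⁽⁴⁾g₂⁽³⁾ − g₁⁽³⁾g₂⁽⁴⁾)·(2λ f₀ − (2λ+9) f₁ θ)·α^{λ+5}. -/
import Mathlib


open Polynomial

/-- The superalgebra `K[x,θ]`: `F = f₀ + θ f₁` is the pair `(f₀, f₁)`. -/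
abbrev SP := Polynomial ℝ × Polynomial ℝ

/-- Multiplication in `K[x,θ]`. -/
noncomputable def pm (F G : SP) : SP := (F.1 * G.1, F.1 * G.2 + F.2 * G.1)

/-- `∂/∂x`. -/
noncomputable def dX (F : SP) : SP := (derivative F.1, derivative F.2)

/-- `η̄ = ∂/∂θ − θ∂/∂x`. -/
noncomputable def etaBar (F : SP) : SP := (F.2, -derivative F.1)

/-- The supertransvectant 1-cocycle `Υ_{μ,μ+5/2}` evaluated on an *even*
contact field `X_g`, `g ∈ K[x]`:
`Υ_{μ,μ+5/2}(X_g)(F α^μ) = (2μ η̄(g⁽³⁾)F − 3 η̄(g'')F' − g⁽³⁾ η̄(F)) α^{μ+5/2}`. -/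
noncomputable def Ups52 (mu : ℝ) (g : Polynomial ℝ) (F : SP) : SP :=
  (2 * mu) • pm (etaBar (dX (dX (dX (g, 0))))) F
    - (3 : ℝ) • pm (etaBar (dX (dX (g, 0)))) (dX F)
    - pm (dX (dX (dX (g, 0)))) (etaBar F)

/-- The component `F_λ → F_{λ+5}` of the cup-product
`B_{λ,λ+5} = [[Υ_{λ+5/2,λ+5}, Υ_{λ,λ+5/2}]]` evaluated on the even contact
fields `X_{g₁}, X_{g₂}` (both `γ`'s are odd, `p(X_{gᵢ}) = 0`, so
`B(X_{g₁},X_{g₂}) = −γ₁(X_{g₁})∘γ₂(X_{g₂}) + γ₁(X_{g₂})∘γ₂(X_{g₁})`). -/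
noncomputable def Bcup (lam : ℝ) (g1 g2 : Polynomial ℝ) (F : SP) : SP :=
  - Ups52 (lam + 5 / 2) g1 (Ups52 lam g2 F) + Ups52 (lam + 5 / 2) g2 (Ups52 lam g1 F)

/-- Up to an overall nonzero scalar, the cup-product `B_{λ,λ+5}` evaluated on
even fields `X_{g₁}, X_{g₂}` and a density `F = f₀ + f₁θ` equals
`(g₁⁽⁴⁾g₂⁽³⁾ − g₁⁽³⁾g₂⁽⁴⁾)·(2λ f₀ − (2λ+9) f₁ θ)·α^{λ+5}`. -/
theorem Bcup_formula :
    ∃ c : ℝ, c ≠ 0 ∧ ∀ (lam : ℝ) (g1 g2 : Polynomial ℝ) (F : SP),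
      Bcup lam g1 g2 F
        = c • (((2 * lam) • ((derivative^[4] g1 * derivative^[3] g2
              - derivative^[3] g1 * derivative^[4] g2) * F.1),
            (-(2 * lam + 9)) • ((derivative^[4] g1 * derivative^[3] g2
              - derivative^[3] g1 * derivative^[4] g2) * F.2)) : SP) := by
  refine ⟨1, one_ne_zero, fun lam g1 g2 F => ?_⟩
  obtain ⟨f0, f1⟩ := F
  simp only [Bcup, Ups52, show 2*(lam+5/2) = 2*lam+5 from by ring]
  simp only [ pm, dX, etaBar, Prod.mk.injEq, Prod.smul_mk, Prod.sub_def,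
    Prod.neg_mk, Prod.fst, Prod.snd, Prod.mk_add_mk, Function.iterate_succ,
    Function.iterate_zero, Function.comp_apply, id_eq, smul_eq_C_mul,
    derivative_mul, derivative_add, derivative_sub, derivative_neg, derivative_zero,
    derivative_C_mul, map_add, map_sub, map_neg, map_mul, map_one, map_ofNat, mul_zero, zero_mul, add_zero, zero_add, neg_zero, map_ofNat]
  constructor <;> ring
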